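/- arXiv:1604.05485 — 2 statements merged into one kernel-verified Lean document; each statement's English description precedes it below -/
import Mathlib

section
/- Let H_1 and H_2 be complex Hilbert spaces and let T = [[T_1, X],[0, T_2]] be a bounded linear operator on H_1 ⊕ H_2 (so T_1 ∈ L(H_1), T_2 ∈ L(H_2), X ∈ L(H_2, H_1)). Then T is a contraction if and only if T_1 and T_2 are contractions and there exists a contraction Γ from 𝒟_{T_2} to 𝒟_{T_1*} such that X = D_{T_1*} Γ D_{T_2}. -/
noncomputable section

open ContinuousLinearMap

section Defs

variable {H K : Type*} [NormedAddCommGroup H] [InnerProductSpace ℂ H] [CompleteSpace H]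
  [NormedAddCommGroup K] [InnerProductSpace ℂ K] [CompleteSpace K]

/-- The defect operator `D_A = (1 - A* A) ^ (1/2)` of an operator `A : H →L[ℂ] K`. -/
def defectOp (A : H →L[ℂ] K) : H →L[ℂ] H :=
  CFC.sqrt (1 - (adjoint A) ∘L A)

/-- The defect space `𝒟_A`, i.e. the closure of the range of the defect operator `D_A`.
(The defect space `𝒟_{A*}` of the adjoint is `defectSpace (adjoint A)`.) -/
def defectSpace (A : H →L[ℂ] K) : Submodule ℂ H :=
  (LinearMap.range (defectOp A : H →ₗ[ℂ] H)).topologicalClosure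

instance defectSpace.instCompleteSpace (A : H →L[ℂ] K) : CompleteSpace (defectSpace A) :=
  (Submodule.isClosed_topologicalClosure _).completeSpace_coe

/-- The characteristic function of `T` as an operator on the whole space:
`Θ_T(z) = -T + z • D_{T*} (1 - z T*)⁻¹ D_T`. -/
def charFunFull (T : H →L[ℂ] H) (z : ℂ) : H →L[ℂ] H :=
  -T + z • (defectOp (adjoint T) ∘L Ring.inverse (1 - z • adjoint T) ∘L defectOp T)

/-- The characteristic function `Θ_T(z) : 𝒟_T → 𝒟_{T*}`.  For a contraction `T` the operator
`charFunFull T z` maps `𝒟_T` into `𝒟_{T*}`, so composing with the orthogonal projection onto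
`𝒟_{T*}` implements the restriction-corestriction `(-T + z D_{T*}(1 - zT*)⁻¹ D_T)|_{𝒟_T}`. -/
def charFun (T : H →L[ℂ] H) (z : ℂ) : defectSpace T →L[ℂ] defectSpace (adjoint T) :=
  Submodule.orthogonalProjectionOnto (defectSpace (adjoint T)) ∘L charFunFull T z ∘L (defectSpace T).subtypeL

end Defs

section Block

variable {E₁ E₂ F₁ F₂ : Type*} [NormedAddCommGroup E₁] [InnerProductSpace ℂ E₁]
  [NormedAddCommGroup E₂] [InnerProductSpace ℂ E₂]
  [NormedAddCommGroup F₁] [InnerProductSpace ℂ F₁]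
  [NormedAddCommGroup F₂] [InnerProductSpace ℂ F₂]

/-- The `2 × 2` block operator `[[f₁₁, f₁₂], [f₂₁, f₂₂]]` between `ℓ²`-direct sums of
Hilbert spaces. -/
def blockOp (f₁₁ : E₁ →L[ℂ] F₁) (f₁₂ : E₂ →L[ℂ] F₁) (f₂₁ : E₁ →L[ℂ] F₂) (f₂₂ : E₂ →L[ℂ] F₂) :
    WithLp 2 (E₁ × E₂) →L[ℂ] WithLp 2 (F₁ × F₂) :=
  ((WithLp.prodContinuousLinearEquiv 2 ℂ F₁ F₂).symm : F₁ × F₂ →L[ℂ] WithLp 2 (F₁ × F₂)) ∘L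
    ((f₁₁.coprod f₁₂).prod (f₂₁.coprod f₂₂)) ∘L
    ((WithLp.prodContinuousLinearEquiv 2 ℂ E₁ E₂ : WithLp 2 (E₁ × E₂) ≃L[ℂ] E₁ × E₂) :
      WithLp 2 (E₁ × E₂) →L[ℂ] E₁ × E₂)

end Block

/-!
Since `‖y‖² - ‖T₂ y‖² = ‖D_{T₂} y‖²`, the block operator is a contraction iff `T₂` is one and
`‖T₁ x + X y‖² ≤ ‖x‖² + ‖D_{T₂} y‖²`. By Douglas' lemma the latter means `X = Y P D_{T₂}`, with
`P` the orthogonal projection onto `𝒟_{T₂}`, for an operator `Y` on `𝒟_{T₂}` such that the row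
`[T₁, Y]` is a contraction. Passing to adjoints, the row is a contraction iff
`‖T₁* k‖² + ‖Y* k‖² ≤ ‖k‖²`, i.e. `‖Y* k‖ ≤ ‖D_{T₁*} k‖`, and Douglas' lemma applied to `Y*`
gives `Y = D_{T₁*} Γ` with `Γ` a contraction.
-/

open scoped InnerProductSpace

namespace ContinuousLinearMap

variable {𝕜 E F G K L : Type*} [RCLike 𝕜]

theorem opNorm_le_one_iff [NormedAddCommGroup E] [NormedSpace 𝕜 E] [NormedAddCommGroup F]
    [NormedSpace 𝕜 F] (f : E →L[𝕜] F) : ‖f‖ ≤ 1 ↔ ∀ x, ‖f x‖ ≤ ‖x‖ := by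
  simp only [opNorm_le_iff zero_le_one, one_mul]

section RowColumn

variable [NormedAddCommGroup E] [InnerProductSpace 𝕜 E] [CompleteSpace E]
  [NormedAddCommGroup F] [InnerProductSpace 𝕜 F] [CompleteSpace F]
  [NormedAddCommGroup G] [InnerProductSpace 𝕜 G] [CompleteSpace G]

theorem norm_add_sq_le_iff_norm_adjoint_sq_add_le (A : E →L[𝕜] G) (B : F →L[𝕜] G) :
    (∀ x y, ‖A x + B y‖ ^ 2 ≤ ‖x‖ ^ 2 + ‖y‖ ^ 2) ↔
      ∀ k, ‖adjoint A k‖ ^ 2 + ‖adjoint B k‖ ^ 2 ≤ ‖k‖ ^ 2 := by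
  constructor
  · intro h k
    set v := A (adjoint A k) + B (adjoint B k)
    have hv : ‖adjoint A k‖ ^ 2 + ‖adjoint B k‖ ^ 2 = RCLike.re ⟪k, v⟫_𝕜 := by
      rw [inner_add_right, map_add, ← adjoint_inner_left A, ← adjoint_inner_left B,
        ← norm_sq_eq_re_inner (𝕜 := 𝕜), ← norm_sq_eq_re_inner (𝕜 := 𝕜)]
    have hcs := re_inner_le_norm (𝕜 := 𝕜) k v
    have hrow := h (adjoint A k) (adjoint B k)
    nlinarith [norm_nonneg k, norm_nonneg v]
  · intro h x y
    set k := A x + B y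
    have hk : ‖k‖ ^ 2 = RCLike.re ⟪x, adjoint A k⟫_𝕜 + RCLike.re ⟪y, adjoint B k⟫_𝕜 := by
      rw [adjoint_inner_right, adjoint_inner_right, ← map_add, ← inner_add_left,
        ← norm_sq_eq_re_inner (𝕜 := 𝕜)]
    have hcs₁ := re_inner_le_norm (𝕜 := 𝕜) x (adjoint A k)
    have hcs₂ := re_inner_le_norm (𝕜 := 𝕜) y (adjoint B k)
    have hcol := h k
    nlinarith [norm_nonneg k, norm_nonneg x, norm_nonneg y, norm_nonneg (adjoint A k),
      norm_nonneg (adjoint B k), sq_nonneg (‖x‖ * ‖adjoint B k‖ - ‖y‖ * ‖adjoint A k‖)]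

end RowColumn

section Douglas

variable [NormedAddCommGroup E] [NormedSpace 𝕜 E]
  [NormedAddCommGroup K] [InnerProductSpace 𝕜 K] [CompleteSpace K]
  [NormedAddCommGroup L] [NormedSpace 𝕜 L] [CompleteSpace L]

theorem coe_orthogonalProjectionOnto_topologicalClosure_range_apply (B : E →L[𝕜] K) (x : E) :
    ((LinearMap.range (B : E →ₗ[𝕜] K)).topologicalClosure.orthogonalProjectionOnto (B x) : K) =
      B x := by
  rw [Submodule.orthogonalProjectionOnto_mem_subspace_eq_self ⟨B x, _⟩]
  exact Submodule.le_topologicalClosure _ (LinearMap.mem_range_self _ x)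

theorem denseRange_orthogonalProjectionOnto_topologicalClosure_range_comp (B : E →L[𝕜] K) :
    DenseRange
      ((LinearMap.range (B : E →ₗ[𝕜] K)).topologicalClosure.orthogonalProjectionOnto ∘L B) := by
  rw [DenseRange, Subtype.dense_iff]
  refine fun v hv => closure_mono ?_ hv
  rintro _ ⟨x, rfl⟩
  exact ⟨_, Set.mem_range_self x, coe_orthogonalProjectionOnto_topologicalClosure_range_apply B x⟩

/-- Douglas' factorization lemma. -/
theorem norm_apply_le_iff_exists_eq_comp_orthogonalProjectionOnto (A : E →L[𝕜] L)
    (B : E →L[𝕜] K) :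
    (∀ x, ‖A x‖ ≤ ‖B x‖) ↔
      ∃ C : (LinearMap.range (B : E →ₗ[𝕜] K)).topologicalClosure →L[𝕜] L, ‖C‖ ≤ 1 ∧
        A = C ∘L (LinearMap.range (B : E →ₗ[𝕜] K)).topologicalClosure.orthogonalProjectionOnto ∘L
          B := by
  set S := (LinearMap.range (B : E →ₗ[𝕜] K)).topologicalClosure
  have hPB : ∀ x, ‖S.orthogonalProjectionOnto (B x)‖ = ‖B x‖ := fun x =>
    congrArg norm (coe_orthogonalProjectionOnto_topologicalClosure_range_apply B x)
  constructor
  · intro hAB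
    set e : E →ₗ[𝕜] S := (S.orthogonalProjectionOnto ∘L B).toLinearMap
    have hdense : DenseRange e :=
      denseRange_orthogonalProjectionOnto_topologicalClosure_range_comp B
    have hbound : ∀ x, ‖(A : E →ₗ[𝕜] L) x‖ ≤ 1 * ‖e x‖ := fun x => by
      simpa only [one_mul, e, coe_coe, comp_apply, hPB] using hAB x
    refine ⟨(A : E →ₗ[𝕜] L).extendOfNorm e,
      LinearMap.opNorm_extendOfNorm_le hdense zero_le_one hbound, ?_⟩
    ext x
    exact (LinearMap.extendOfNorm_eq hdense ⟨1, hbound⟩ x).symm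
  · rintro ⟨C, hC, rfl⟩ x
    exact ((opNorm_le_one_iff C).mp hC _).trans_eq (hPB x)

theorem row_bound_iff_exists_row_contraction_comp_orthogonalProjectionOnto
    [NormedAddCommGroup G] [NormedSpace 𝕜 G] (T : G →L[𝕜] L) (X : E →L[𝕜] L) (B : E →L[𝕜] K) :
    (∀ g e, ‖T g + X e‖ ^ 2 ≤ ‖g‖ ^ 2 + ‖B e‖ ^ 2) ↔
      ∃ Y : (LinearMap.range (B : E →ₗ[𝕜] K)).topologicalClosure →L[𝕜] L,
        (∀ g s, ‖T g + Y s‖ ^ 2 ≤ ‖g‖ ^ 2 + ‖s‖ ^ 2) ∧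
        X = Y ∘L (LinearMap.range (B : E →ₗ[𝕜] K)).topologicalClosure.orthogonalProjectionOnto ∘L
          B := by
  have hPB : ∀ e, ‖(LinearMap.range (B : E →ₗ[𝕜] K)).topologicalClosure.orthogonalProjectionOnto
      (B e)‖ = ‖B e‖ := fun e =>
    congrArg norm (coe_orthogonalProjectionOnto_topologicalClosure_range_apply B e)
  constructor
  · intro h
    have hXB : ∀ e, ‖X e‖ ≤ ‖B e‖ := fun e => by
      simpa [sq_le_sq₀ (norm_nonneg _) (norm_nonneg _)] using h 0 e
    obtain ⟨Y, -, hX⟩ := (norm_apply_le_iff_exists_eq_comp_orthogonalProjectionOnto X B).mp hXB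
    refine ⟨Y, fun g s => ?_, hX⟩
    induction s using
      (denseRange_orthogonalProjectionOnto_topologicalClosure_range_comp B).induction_on with
    | hp => exact isClosed_le (by fun_prop) (by fun_prop)
    | ih e =>
      have key := h g e
      rw [hX, ← hPB e] at key
      exact key
  · rintro ⟨Y, hY, rfl⟩ g e
    rw [comp_apply, comp_apply, ← hPB e]
    exact hY g _

end Douglas

section AdjointDouglas

variable [NormedAddCommGroup E] [InnerProductSpace 𝕜 E] [CompleteSpace E]
  [NormedAddCommGroup F] [InnerProductSpace 𝕜 F] [CompleteSpace F]
  [NormedAddCommGroup K] [InnerProductSpace 𝕜 K] [CompleteSpace K]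

theorem norm_adjoint_apply_le_iff_exists_eq_adjoint_comp_subtypeL (Y : E →L[𝕜] K)
    (B : K →L[𝕜] F) :
    (∀ k, ‖adjoint Y k‖ ≤ ‖B k‖) ↔
      ∃ Γ : E →L[𝕜] (LinearMap.range (B : K →ₗ[𝕜] F)).topologicalClosure, ‖Γ‖ ≤ 1 ∧
        Y = adjoint B ∘L (LinearMap.range (B : K →ₗ[𝕜] F)).topologicalClosure.subtypeL ∘L Γ := by
  rw [norm_apply_le_iff_exists_eq_comp_orthogonalProjectionOnto]
  constructor
  · rintro ⟨C, hC, hY⟩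
    refine ⟨adjoint C, by rwa [LinearIsometryEquiv.norm_map], ?_⟩
    rw [← adjoint_adjoint Y, hY, adjoint_comp, adjoint_comp,
      Submodule.adjoint_orthogonalProjectionOnto, comp_assoc]
  · rintro ⟨Γ, hΓ, rfl⟩
    refine ⟨adjoint Γ, by rwa [LinearIsometryEquiv.norm_map], ?_⟩
    rw [adjoint_comp, adjoint_comp, Submodule.adjoint_subtypeL, adjoint_adjoint, comp_assoc]

end AdjointDouglas

end ContinuousLinearMap

open ContinuousLinearMap

section Defect

variable {G K E : Type*} [NormedAddCommGroup G] [InnerProductSpace ℂ G] [CompleteSpace G]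
  [NormedAddCommGroup K] [InnerProductSpace ℂ K] [CompleteSpace K]
  [NormedAddCommGroup E] [InnerProductSpace ℂ E] [CompleteSpace E]

theorem isSelfAdjoint_defectOp (A : G →L[ℂ] K) : IsSelfAdjoint (defectOp A) :=
  IsSelfAdjoint.of_nonneg (CFC.sqrt_nonneg _)

theorem adjoint_comp_self_le_one {A : G →L[ℂ] K} (hA : ‖A‖ ≤ 1) : adjoint A ∘L A ≤ 1 := by
  have hpos : 0 ≤ adjoint A ∘L A := (nonneg_iff_isPositive _).mpr (isPositive_adjoint_comp_self A)
  rw [← CStarAlgebra.norm_le_one_iff_of_nonneg _ hpos, norm_adjoint_comp_self]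
  exact mul_le_one₀ hA (norm_nonneg A) hA

theorem defectOp_mul_self {A : G →L[ℂ] K} (hA : ‖A‖ ≤ 1) :
    defectOp A * defectOp A = 1 - adjoint A ∘L A :=
  CFC.sqrt_mul_sqrt_self _ (sub_nonneg.mpr (adjoint_comp_self_le_one hA))

theorem norm_apply_sq_add_norm_defectOp_apply_sq {A : G →L[ℂ] K} (hA : ‖A‖ ≤ 1) (x : G) :
    ‖A x‖ ^ 2 + ‖defectOp A x‖ ^ 2 = ‖x‖ ^ 2 := by
  rw [apply_norm_sq_eq_inner_adjoint_left (defectOp A), (isSelfAdjoint_defectOp A).adjoint_eq,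
    ← mul_def, defectOp_mul_self hA, sub_apply, one_apply_eq_self, inner_sub_left, map_sub,
    ← apply_norm_sq_eq_inner_adjoint_left, ← norm_sq_eq_re_inner (𝕜 := ℂ)]
  ring

theorem row_contraction_iff_exists_eq_defectOp_comp {T : G →L[ℂ] K} (hT : ‖T‖ ≤ 1)
    (Y : E →L[ℂ] K) :
    (∀ g e, ‖T g + Y e‖ ^ 2 ≤ ‖g‖ ^ 2 + ‖e‖ ^ 2) ↔
      ∃ Γ : E →L[ℂ] defectSpace (adjoint T), ‖Γ‖ ≤ 1 ∧
        Y = defectOp (adjoint T) ∘L (defectSpace (adjoint T)).subtypeL ∘L Γ := by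
  have hT' : ‖adjoint T‖ ≤ 1 := by rwa [LinearIsometryEquiv.norm_map]
  calc (∀ g e, ‖T g + Y e‖ ^ 2 ≤ ‖g‖ ^ 2 + ‖e‖ ^ 2)
      ↔ ∀ k, ‖adjoint T k‖ ^ 2 + ‖adjoint Y k‖ ^ 2 ≤ ‖k‖ ^ 2 :=
        norm_add_sq_le_iff_norm_adjoint_sq_add_le T Y
    _ ↔ ∀ k, ‖adjoint Y k‖ ≤ ‖defectOp (adjoint T) k‖ := forall_congr' fun k => by
        rw [← norm_apply_sq_add_norm_defectOp_apply_sq hT' k, add_le_add_iff_left,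
          sq_le_sq₀ (norm_nonneg _) (norm_nonneg _)]
    _ ↔ _ := by
        rw [norm_adjoint_apply_le_iff_exists_eq_adjoint_comp_subtypeL,
          (isSelfAdjoint_defectOp (adjoint T)).adjoint_eq]
        rfl

end Defect

theorem blockOp_upperTriangular_contraction_iff {E₁ E₂ F₁ F₂ : Type*}
    [NormedAddCommGroup E₁] [InnerProductSpace ℂ E₁] [NormedAddCommGroup E₂]
    [InnerProductSpace ℂ E₂] [NormedAddCommGroup F₁] [InnerProductSpace ℂ F₁]
    [NormedAddCommGroup F₂] [InnerProductSpace ℂ F₂]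
    (A : E₁ →L[ℂ] F₁) (B : E₂ →L[ℂ] F₁) (C : E₂ →L[ℂ] F₂) :
    (∀ h, ‖blockOp A B 0 C h‖ ≤ ‖h‖) ↔ ∀ x y, ‖A x + B y‖ ^ 2 + ‖C y‖ ^ 2 ≤ ‖x‖ ^ 2 + ‖y‖ ^ 2 := by
  simp only [← sq_le_sq₀ (norm_nonneg _) (norm_nonneg _)]
  constructor
  · intro h x y
    simpa [blockOp, WithLp.prod_norm_sq_eq_of_L2] using h (WithLp.toLp 2 (x, y))
  · intro h v
    simpa [blockOp, WithLp.prod_norm_sq_eq_of_L2] using h v.fst v.snd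

theorem norm_add_sq_add_norm_sq_le_iff_row_bound_defectOp {E₁ E₂ F₁ F₂ : Type*}
    [NormedAddCommGroup E₁] [InnerProductSpace ℂ E₁]
    [NormedAddCommGroup E₂] [InnerProductSpace ℂ E₂] [CompleteSpace E₂]
    [NormedAddCommGroup F₁] [InnerProductSpace ℂ F₁]
    [NormedAddCommGroup F₂] [InnerProductSpace ℂ F₂] [CompleteSpace F₂]
    (A : E₁ →L[ℂ] F₁) (B : E₂ →L[ℂ] F₁) (C : E₂ →L[ℂ] F₂) :
    (∀ x y, ‖A x + B y‖ ^ 2 + ‖C y‖ ^ 2 ≤ ‖x‖ ^ 2 + ‖y‖ ^ 2) ↔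
      ‖A‖ ≤ 1 ∧ ‖C‖ ≤ 1 ∧ ∀ x y, ‖A x + B y‖ ^ 2 ≤ ‖x‖ ^ 2 + ‖defectOp C y‖ ^ 2 := by
  constructor
  · intro h
    have hA : ‖A‖ ≤ 1 := (opNorm_le_one_iff A).2 fun x => by
      simpa [sq_le_sq₀ (norm_nonneg _) (norm_nonneg _)] using h x 0
    have hC : ‖C‖ ≤ 1 := (opNorm_le_one_iff C).2 fun y => by
      have hy := h 0 y
      rw [map_zero, zero_add, norm_zero] at hy
      rw [← sq_le_sq₀ (norm_nonneg _) (norm_nonneg _)]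
      nlinarith [sq_nonneg ‖B y‖]
    refine ⟨hA, hC, fun x y => ?_⟩
    linarith [h x y, norm_apply_sq_add_norm_defectOp_apply_sq hC y]
  · rintro ⟨-, hC, h⟩ x y
    linarith [h x y, norm_apply_sq_add_norm_defectOp_apply_sq hC y]

/-- An upper triangular block operator `T = [[T₁, X], [0, T₂]]` on `H₁ ⊕ H₂`
is a contraction if and only if `T₁` and `T₂` are contractions and `X = D_{T₁*} Γ D_{T₂}` for
some contraction `Γ : 𝒟_{T₂} → 𝒟_{T₁*}` (where `D_{T₂}` is viewed as a map `H₂ → 𝒟_{T₂}` and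
`D_{T₁*}` acts on `𝒟_{T₁*} ⊆ H₁`). -/
theorem stmt2 {H₁ H₂ : Type*} [NormedAddCommGroup H₁] [InnerProductSpace ℂ H₁] [CompleteSpace H₁]
    [NormedAddCommGroup H₂] [InnerProductSpace ℂ H₂] [CompleteSpace H₂]
    (T₁ : H₁ →L[ℂ] H₁) (T₂ : H₂ →L[ℂ] H₂) (X : H₂ →L[ℂ] H₁) :
    (∀ h : WithLp 2 (H₁ × H₂), ‖blockOp T₁ X 0 T₂ h‖ ≤ ‖h‖) ↔
      (∀ h : H₁, ‖T₁ h‖ ≤ ‖h‖) ∧ (∀ h : H₂, ‖T₂ h‖ ≤ ‖h‖) ∧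
        ∃ Γ : defectSpace T₂ →L[ℂ] defectSpace (adjoint T₁),
          (∀ x : defectSpace T₂, ‖Γ x‖ ≤ ‖x‖) ∧
          X = defectOp (adjoint T₁) ∘L (defectSpace (adjoint T₁)).subtypeL ∘L Γ ∘L
                Submodule.orthogonalProjectionOnto (defectSpace T₂) ∘L defectOp T₂ := by
  rw [blockOp_upperTriangular_contraction_iff, norm_add_sq_add_norm_sq_le_iff_row_bound_defectOp]
  simp only [← opNorm_le_one_iff]
  refine and_congr_right fun hT₁ => and_congr_right fun _ => ?_
  rw [row_bound_iff_exists_row_contraction_comp_orthogonalProjectionOnto]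
  constructor
  · rintro ⟨Y, hY, rfl⟩
    obtain ⟨Γ, hΓ, rfl⟩ := (row_contraction_iff_exists_eq_defectOp_comp hT₁ Y).1 hY
    exact ⟨Γ, hΓ, rfl⟩
  · rintro ⟨Γ, hΓ, rfl⟩
    exact ⟨_, (row_contraction_iff_exists_eq_defectOp_comp hT₁ _).2 ⟨Γ, hΓ, rfl⟩, rfl⟩
end
end

section
/- Let T be a completely nonunitary contraction on a complex Hilbert space H, let M be a Hilbert space, let N be a contraction on a Hilbert space H_0 that is nilpotent of order m, let V_1 : 𝒟_{N*} ⊕ M → 𝒟_{T*} be a coisometry and V_2 : 𝒟_T → 𝒟_N ⊕ M be an isometry, and suppose Θ_T(z) = V_1 [[Θ_N(z), 0],[0, I_M]] V_2 for all z ∈ 𝔻. Then Θ_T is a polynomial of degree at most m, i.e., there exist bounded operators A_0, …, A_m from 𝒟_T to 𝒟_{T*} with Θ_T(z) = Σ_{k=0}^m z^k A_k for all z ∈ 𝔻. -/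
noncomputable section

open ContinuousLinearMap

/-- A contraction `T` is completely nonunitary if there is no nonzero closed subspace
reducing `T` on which `T` restricts to a unitary operator (equivalently, on which both `T`
and `T*` are isometric). -/
def IsCnu {H : Type*} [NormedAddCommGroup H] [InnerProductSpace ℂ H] [CompleteSpace H]
    (T : H →L[ℂ] H) : Prop :=
  ∀ M : Submodule ℂ H, IsClosed (M : Set H) →
    (∀ x ∈ M, T x ∈ M) → (∀ x ∈ M, adjoint T x ∈ M) →
    (∀ x ∈ M, ‖T x‖ = ‖x‖) → (∀ x ∈ M, ‖adjoint T x‖ = ‖x‖) → M = ⊥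

/-! Since `N*` is nilpotent of order at most `m`, the resolvent `(1 - z N*)⁻¹` is the finite
geometric sum `∑_{k < m} z^k N*^k`, so `Θ_N` is a polynomial of degree at most `m`. The
factorization only embeds `Θ_N` as a block, adds the constant block `1_M` and compresses by
`V₁, V₂`; all three operations are linear in the coefficients and preserve the degree bound. -/

open Finset

theorem Ring.inverse_one_sub_eq_geom_sum {R : Type*} [Ring R] {x : R} {m : ℕ} (hx : x ^ m = 0) :
    Ring.inverse (1 - x) = ∑ i ∈ range m, x ^ i := by
  have hleft := mul_neg_geom_sum x m
  have hright := geom_sum_mul_neg x m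
  rw [hx, sub_zero] at hleft hright
  exact Ring.inverse_unit ⟨1 - x, _, hleft, hright⟩

section Polynomial

variable {X Y : Type*} [AddCommGroup X] [Module ℂ X] [AddCommGroup Y] [Module ℂ Y]

def IsPolynomialOfDegreeLE (Φ : ℂ → X) (m : ℕ) : Prop :=
  ∃ A : ℕ → X, ∀ z, Φ z = ∑ k ∈ range (m + 1), z ^ k • A k

namespace IsPolynomialOfDegreeLE

variable {Φ : ℂ → X} {m : ℕ}

theorem map (hΦ : IsPolynomialOfDegreeLE Φ m) (Λ : X →ₗ[ℂ] Y) :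
    IsPolynomialOfDegreeLE (fun z => Λ (Φ z)) m := by
  obtain ⟨A, hA⟩ := hΦ
  exact ⟨fun k => Λ (A k), fun z => by simp only [hA z, map_sum, map_smul]⟩

theorem add_const (hΦ : IsPolynomialOfDegreeLE Φ m) (C : X) :
    IsPolynomialOfDegreeLE (fun z => Φ z + C) m := by
  obtain ⟨A, hA⟩ := hΦ
  refine ⟨fun k => A k + if k = 0 then C else 0, fun z => ?_⟩
  simp [hA z, smul_add, sum_add_distrib]

end IsPolynomialOfDegreeLE

end Polynomial

theorem IsPolynomialOfDegreeLE.comp {E F E' F' : Type*} [NormedAddCommGroup E]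
    [NormedSpace ℂ E] [NormedAddCommGroup F] [NormedSpace ℂ F]
    [NormedAddCommGroup E'] [NormedSpace ℂ E'] [NormedAddCommGroup F']
    [NormedSpace ℂ F'] {Φ : ℂ → E →L[ℂ] F} {m : ℕ} (hΦ : IsPolynomialOfDegreeLE Φ m)
    (L : F →L[ℂ] F') (R : E' →L[ℂ] E) :
    IsPolynomialOfDegreeLE (fun z => L ∘L Φ z ∘L R) m :=
  hΦ.map ⟨⟨fun f => L ∘L f ∘L R, fun f g => by simp [add_comp, comp_add]⟩, fun c f => by simp⟩

section BlockOp

variable {E₁ E₂ F₁ F₂ : Type*} [NormedAddCommGroup E₁] [InnerProductSpace ℂ E₁]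
  [NormedAddCommGroup E₂] [InnerProductSpace ℂ E₂]
  [NormedAddCommGroup F₁] [InnerProductSpace ℂ F₁]
  [NormedAddCommGroup F₂] [InnerProductSpace ℂ F₂]

theorem blockOp_add (a a' : E₁ →L[ℂ] F₁) (b b' : E₂ →L[ℂ] F₁) (c c' : E₁ →L[ℂ] F₂)
    (d d' : E₂ →L[ℂ] F₂) :
    blockOp (a + a') (b + b') (c + c') (d + d') = blockOp a b c d + blockOp a' b' c' d' := by
  ext x; simp [blockOp, ← WithLp.toLp_add, Prod.add_def]

theorem blockOp_smul (z : ℂ) (a : E₁ →L[ℂ] F₁) (b : E₂ →L[ℂ] F₁) (c : E₁ →L[ℂ] F₂)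
    (d : E₂ →L[ℂ] F₂) :
    blockOp (z • a) (z • b) (z • c) (z • d) = z • blockOp a b c d := by
  ext x; simp [blockOp, ← WithLp.toLp_smul, Prod.smul_def]

variable (E₂ F₂) in
def blockOpUpperLeftₗ :
    (E₁ →L[ℂ] F₁) →ₗ[ℂ] WithLp 2 (E₁ × E₂) →L[ℂ] WithLp 2 (F₁ × F₂) where
  toFun a := blockOp a 0 0 0
  map_add' a a' := by simpa using blockOp_add a a' (0 : E₂ →L[ℂ] F₁) 0 (0 : E₁ →L[ℂ] F₂) 0 0 0
  map_smul' z a := by simpa using blockOp_smul z a (0 : E₂ →L[ℂ] F₁) (0 : E₁ →L[ℂ] F₂) 0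

theorem blockOp_diag_eq_add (a : E₁ →L[ℂ] F₁) (d : E₂ →L[ℂ] F₂) :
    blockOp a 0 0 d = blockOp a 0 0 0 + blockOp 0 0 0 d := by
  simpa using blockOp_add a 0 (0 : E₂ →L[ℂ] F₁) 0 (0 : E₁ →L[ℂ] F₂) 0 0 d

end BlockOp

section NilpotentCharFun

variable {H : Type*} [NormedAddCommGroup H] [InnerProductSpace ℂ H] [CompleteSpace H]

theorem charFunFull_eq_of_pow_eq_zero {N : H →L[ℂ] H} {m : ℕ} (hN : N ^ m = 0) (z : ℂ) :
    charFunFull N z = -N + ∑ k ∈ range m,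
      z ^ (k + 1) • (defectOp (adjoint N) ∘L (adjoint N ^ k) ∘L defectOp N) := by
  have hN' : (z • adjoint N) ^ m = 0 := by
    rw [smul_pow, ← star_eq_adjoint, ← star_pow, hN, star_zero, smul_zero]
  rw [charFunFull, Ring.inverse_one_sub_eq_geom_sum hN']
  ext x
  simp [smul_pow, smul_smul, pow_succ, mul_comm, smul_sum]

theorem isPolynomialOfDegreeLE_charFunFull {N : H →L[ℂ] H} {m : ℕ} (hN : N ^ m = 0) :
    IsPolynomialOfDegreeLE (charFunFull N) m := by
  refine ⟨fun
    | 0 => -N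
    | k + 1 => defectOp (adjoint N) ∘L (adjoint N ^ k) ∘L defectOp N, fun z => ?_⟩
  rw [sum_range_succ', charFunFull_eq_of_pow_eq_zero hN, add_comm]
  simp

theorem isPolynomialOfDegreeLE_charFun {N : H →L[ℂ] H} {m : ℕ} (hN : N ^ m = 0) :
    IsPolynomialOfDegreeLE (charFun N) m :=
  (isPolynomialOfDegreeLE_charFunFull hN).comp _ _

end NilpotentCharFun

theorem stmt8_general {H H₀ M : Type*}
    [NormedAddCommGroup H] [InnerProductSpace ℂ H] [CompleteSpace H]
    [NormedAddCommGroup H₀] [InnerProductSpace ℂ H₀] [CompleteSpace H₀]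
    [NormedAddCommGroup M] [InnerProductSpace ℂ M]
    (T : H →L[ℂ] H)
    (m : ℕ)
    (N : H₀ →L[ℂ] H₀)
    (hNnil : N ^ m = 0)
    (V₁ : WithLp 2 (defectSpace (adjoint N) × M) →L[ℂ] defectSpace (adjoint T))
    (V₂ : defectSpace T →L[ℂ] WithLp 2 (defectSpace N × M))
    (hfac : ∀ z : ℂ, ‖z‖ < 1 →
      charFun T z = V₁ ∘L blockOp (charFun N z) 0 0 1 ∘L V₂) :
    ∃ A : ℕ → (defectSpace T →L[ℂ] defectSpace (adjoint T)),
      ∀ z : ℂ, ‖z‖ < 1 →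
        charFun T z = ∑ k ∈ Finset.range (m + 1), z ^ k • A k := by
  have hblock : IsPolynomialOfDegreeLE (fun z => blockOp (charFun N z) 0 0 (1 : M →L[ℂ] M)) m := by
    have h := ((isPolynomialOfDegreeLE_charFun hNnil).map (blockOpUpperLeftₗ M M)).add_const
      (blockOp 0 0 0 (1 : M →L[ℂ] M))
    simpa only [blockOpUpperLeftₗ, LinearMap.coe_mk, AddHom.coe_mk, ← blockOp_diag_eq_add] using h
  obtain ⟨A, hA⟩ := hblock.comp V₁ V₂
  exact ⟨A, fun z hz => (hfac z hz).trans (hA z)⟩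

/-- (Weak converse of the main theorem) If `T` is a c.n.u. contraction and
`Θ_T(z) = V₁ [[Θ_N(z), 0], [0, 1]] V₂` on `𝔻`, where `N` is a contraction nilpotent of order
`m`, `V₁ : 𝒟_{N*} ⊕ M → 𝒟_{T*}` is a coisometry and `V₂ : 𝒟_T → 𝒟_N ⊕ M` is an isometry,
then `Θ_T` is a polynomial of degree at most `m`. -/
theorem stmt8 {H H₀ M : Type*}
    [NormedAddCommGroup H] [InnerProductSpace ℂ H] [CompleteSpace H]
    [NormedAddCommGroup H₀] [InnerProductSpace ℂ H₀] [CompleteSpace H₀]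
    [NormedAddCommGroup M] [InnerProductSpace ℂ M] [CompleteSpace M]
    (T : H →L[ℂ] H) (hT : ∀ h : H, ‖T h‖ ≤ ‖h‖) (hcnu : IsCnu T)
    (m : ℕ) (hm : 1 ≤ m)
    (N : H₀ →L[ℂ] H₀) (hN : ∀ h : H₀, ‖N h‖ ≤ ‖h‖)
    (hNnil : N ^ m = 0) (hNnil' : N ^ (m - 1) ≠ 0)
    (V₁ : WithLp 2 (defectSpace (adjoint N) × M) →L[ℂ] defectSpace (adjoint T))
    (hV₁ : V₁ ∘L adjoint V₁ = 1)
    (V₂ : defectSpace T →L[ℂ] WithLp 2 (defectSpace N × M))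
    (hV₂ : adjoint V₂ ∘L V₂ = 1)
    (hfac : ∀ z : ℂ, ‖z‖ < 1 →
      charFun T z = V₁ ∘L blockOp (charFun N z) 0 0 1 ∘L V₂) :
    ∃ A : ℕ → (defectSpace T →L[ℂ] defectSpace (adjoint T)),
      ∀ z : ℂ, ‖z‖ < 1 →
        charFun T z = ∑ k ∈ Finset.range (m + 1), z ^ k • A k :=
  stmt8_general T m N hNnil V₁ V₂ hfac
end
end
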